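/- Let λ ∈ ℝ and let ν be a symmetric 2×2 real matrix. For a symmetric positive definite 2×2 matrix G set J(G) := √(det G) · J₀ · G⁻¹ where J₀ = [[0,−1],[1,0]]. Then the second derivative at t = 0 of the map t ↦ J₀ᵗ · J(e^{2λ}·I₂ + t·ν) equals 2·e^{−4λ}·ν⁰·ν + e^{−4λ}·det(ν⁰)·I₂, where ν⁰ := ν − (tr ν / 2)·I₂ is the trace-free part of ν. -/

import Mathlib

open Matrix

/-- The standard rotation matrix `J₀ = [[0,−1],[1,0]]`. -/
def J0 : Matrix (Fin 2) (Fin 2) ℝ := !![0, -1; 1, 0]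

/-- The matrix `J(G) = √(det G) · J₀ · G⁻¹` of the Hodge star operator of the
metric `G` acting on `1`-forms. -/
noncomputable def hodgeJ (G : Matrix (Fin 2) (Fin 2) ℝ) : Matrix (Fin 2) (Fin 2) ℝ :=
  Real.sqrt G.det • (J0 * G⁻¹)

/-- The trace-free part `ν⁰ = ν − (tr ν / 2)·I₂` of a `2 × 2` matrix. -/
noncomputable def traceFree (ν : Matrix (Fin 2) (Fin 2) ℝ) : Matrix (Fin 2) (Fin 2) ℝ :=
  ν - (ν.trace / 2) • 1

/-!
Since `J₀ᵀ J₀ = 1`, we have `J₀ᵀ J(G) = adj G / √(det G)`. Along `G(t) = E·I₂ + t·ν` with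
`E = e^{2λ}`, the adjugate `E·I₂ + t·adj ν` is affine in `t` and `det G(t) = E² + t E tr ν + t² det ν`,
so every entry has the form `(A + t M) / √(a² + t b + t² c)`, whose second derivative at `0` is
`(A (3b²/(4a²) − c) − M b) / a³`. The Cayley–Hamilton identity `adj ν = (tr ν)·I₂ − ν` turns the
resulting matrix `e^{−4λ}((¾ (tr ν)² − det ν)·I₂ − tr ν · adj ν)` into the claimed one.
-/

open Filter Topology

lemma J0_transpose_mul_J0 : J0ᵀ * J0 = 1 := by
  ext i j; fin_cases i <;> fin_cases j <;> simp [J0, Matrix.mul_apply, Fin.sum_univ_two]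

-- For `det G ≤ 0` both sides vanish: `√` of a nonpositive real is `0`, and so is `0⁻¹`.
lemma J0_transpose_mul_hodgeJ (G : Matrix (Fin 2) (Fin 2) ℝ) :
    J0ᵀ * hodgeJ G = (√G.det)⁻¹ • G.adjugate := by
  rw [hodgeJ, Matrix.mul_smul, ← Matrix.mul_assoc, J0_transpose_mul_J0, Matrix.one_mul,
    Matrix.inv_def, Ring.inverse_eq_inv', smul_smul, ← div_eq_mul_inv, Real.sqrt_div_self]

lemma det_smul_one_add_smul {R : Type*} [CommRing R] (a t : R) (ν : Matrix (Fin 2) (Fin 2) R) :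
    (a • 1 + t • ν).det = a ^ 2 + t * (a * ν.trace) + t ^ 2 * ν.det := by
  simp only [Matrix.det_fin_two, Matrix.trace_fin_two, Matrix.add_apply, Matrix.smul_apply,
    Matrix.one_apply_eq, Matrix.one_apply_ne, ne_eq, Fin.reduceEq, not_false_eq_true, smul_eq_mul]
  ring

lemma adjugate_smul_one_add_smul {R : Type*} [CommRing R] (a t : R)
    (ν : Matrix (Fin 2) (Fin 2) R) :
    (a • 1 + t • ν).adjugate = a • 1 + t • ν.adjugate := by
  ext i j; fin_cases i <;> fin_cases j <;> simp [Matrix.adjugate_fin_two]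

lemma two_smul_traceFree_mul_add_det_smul_one (ν : Matrix (Fin 2) (Fin 2) ℝ) :
    (2 : ℝ) • (traceFree ν * ν) + (traceFree ν).det • 1
      = (3 / 4 * ν.trace ^ 2 - ν.det) • 1 - ν.trace • ν.adjugate := by
  ext i j
  fin_cases i <;> fin_cases j <;>
    simp [traceFree, Matrix.adjugate_fin_two, Matrix.det_fin_two, Matrix.trace_fin_two,
      Matrix.mul_apply, Fin.sum_univ_two] <;> ring

lemma deriv_deriv_eq_of_eventually_hasDerivAt {f f' : ℝ → ℝ} {x f'' : ℝ}
    (hf : ∀ᶠ t in 𝓝 x, HasDerivAt f (f' t) t) (hf' : HasDerivAt f' f'' x) :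
    deriv (deriv f) x = f'' := by
  rw [EventuallyEq.deriv_eq (hf.mono fun t ht => ht.deriv), hf'.deriv]

lemma HasDerivAt.inv_sqrt {f : ℝ → ℝ} {f' x : ℝ} (hf : HasDerivAt f f' x) (hx : 0 < f x) :
    HasDerivAt (fun y => (√(f y))⁻¹) (-f' / (2 * f x * √(f x))) x := by
  refine ((hf.sqrt hx.ne').inv (Real.sqrt_pos.2 hx).ne').congr_deriv ?_
  rw [Real.sq_sqrt hx.le]
  field_simp

lemma deriv_deriv_affine_mul_inv_sqrt_quadratic (A M a b c : ℝ) (ha : 0 < a) :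
    deriv (deriv fun t => (A + t * M) * (√(a ^ 2 + t * b + t ^ 2 * c))⁻¹) 0
      = (A * (3 * b ^ 2 / (4 * a ^ 2) - c) - M * b) / a ^ 3 := by
  set q : ℝ → ℝ := fun t => a ^ 2 + t * b + t ^ 2 * c
  have hq : ∀ t, HasDerivAt q (b + 2 * t * c) t := fun t => by
    have := (((hasDerivAt_id t).mul_const b).const_add (a ^ 2)).add ((hasDerivAt_pow 2 t).mul_const c)
    exact this.congr_deriv (by norm_num)
  have hq0 : q 0 = a ^ 2 := by simp [q]
  have hq0_pos : 0 < q 0 := hq0 ▸ by positivity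
  have hu : ∀ t, HasDerivAt (fun t => A + t * M) M t := fun t => by
    simpa using ((hasDerivAt_id t).mul_const M).const_add A
  have hpos : ∀ᶠ t in 𝓝 0, 0 < q t :=
    continuousAt_const.eventually_lt (show Continuous q by fun_prop).continuousAt hq0_pos
  refine deriv_deriv_eq_of_eventually_hasDerivAt
    (f' := fun t => M * (√(q t))⁻¹ + (A + t * M) * (-(b + 2 * t * c) / (2 * q t * √(q t)))) ?_ ?_
  · filter_upwards [hpos] with t ht
    exact (hu t).mul ((hq t).inv_sqrt ht)
  · have hs := (hq 0).inv_sqrt hq0_pos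
    have hq' : HasDerivAt (fun t => b + 2 * t * c) (2 * c) 0 := by
      simpa using (((hasDerivAt_id (0 : ℝ)).const_mul 2).mul_const c).const_add b
    have hden : HasDerivAt (fun t => 2 * q t * √(q t)) _ 0 :=
      ((hq 0).const_mul 2).mul ((hq 0).sqrt hq0_pos.ne')
    have := ((hs.const_mul M).add ((hu 0).mul (hq'.neg.div hden (by positivity))))
    refine this.congr_deriv ?_
    simp only [Pi.neg_apply, Pi.div_apply, hq0, Real.sqrt_sq ha.le]
    field_simp
    ring

theorem statement8_general (l : ℝ) (ν : Matrix (Fin 2) (Fin 2) ℝ) :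
    ∀ i j : Fin 2,
      deriv (deriv
        (fun t : ℝ =>
          (J0ᵀ * hodgeJ (Real.exp (2 * l) • (1 : Matrix (Fin 2) (Fin 2) ℝ) + t • ν)) i j)) 0
      = ((2 * Real.exp (-(4 * l))) • (traceFree ν * ν)
          + (Real.exp (-(4 * l)) * (traceFree ν).det) • (1 : Matrix (Fin 2) (Fin 2) ℝ)) i j := by
  intro i j
  set E := Real.exp (2 * l)
  have hE : 0 < E := Real.exp_pos _
  have hexp : Real.exp (-(4 * l)) = (E ^ 2)⁻¹ := by
    rw [← Real.exp_nat_mul, ← Real.exp_neg]; ring_nf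
  have hentry : (fun t : ℝ => (J0ᵀ * hodgeJ (E • (1 : Matrix (Fin 2) (Fin 2) ℝ) + t • ν)) i j)
      = fun t => ((E • 1 : Matrix (Fin 2) (Fin 2) ℝ) i j + t * ν.adjugate i j)
          * (√(E ^ 2 + t * (E * ν.trace) + t ^ 2 * ν.det))⁻¹ := by
    funext t
    rw [J0_transpose_mul_hodgeJ, det_smul_one_add_smul, adjugate_smul_one_add_smul]
    simp only [Matrix.smul_apply, Matrix.add_apply, smul_eq_mul]
    ring
  have hrhs : (2 * (E ^ 2)⁻¹) • (traceFree ν * ν) + ((E ^ 2)⁻¹ * (traceFree ν).det) • 1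
      = (E ^ 2)⁻¹ • ((3 / 4 * ν.trace ^ 2 - ν.det) • 1 - ν.trace • ν.adjugate) := by
    rw [← two_smul_traceFree_mul_add_det_smul_one, smul_add, smul_smul, smul_smul, mul_comm 2]
  rw [hentry, deriv_deriv_affine_mul_inv_sqrt_quadratic _ _ _ _ _ hE, hexp, hrhs]
  simp only [Matrix.smul_apply, Matrix.sub_apply, smul_eq_mul]
  field_simp

/-- equation (II.21zza) of the paper. For `λ ∈ ℝ` and `ν` a symmetric
`2 × 2` real matrix, the map `t ↦ J₀ᵗ·J(e^{2λ}·I₂ + t·ν)` has second derivative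
`2·e^{−4λ}·ν⁰·ν + e^{−4λ}·det(ν⁰)·I₂` at `t = 0` (entrywise). -/
theorem statement8 (l : ℝ) (ν : Matrix (Fin 2) (Fin 2) ℝ) (hν : ν.IsSymm) :
    ∀ i j : Fin 2,
      deriv (deriv
        (fun t : ℝ =>
          (J0ᵀ * hodgeJ (Real.exp (2 * l) • (1 : Matrix (Fin 2) (Fin 2) ℝ) + t • ν)) i j)) 0
      = ((2 * Real.exp (-(4 * l))) • (traceFree ν * ν)
          + (Real.exp (-(4 * l)) * (traceFree ν).det) • (1 : Matrix (Fin 2) (Fin 2) ℝ)) i j :=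
  statement8_general l ν
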